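/- arXiv:1409.4039 — 7 statements merged into one kernel-verified Lean document; each statement's English description precedes it below -/
import Mathlib

section
/- Let F be a field and n a positive integer such that the set μ_n(F) = {x ∈ F : x^n = 1} has exactly n elements. Let Y be a free ℤ-module of finite rank and L ⊆ Y a submodule with n·Y ⊆ L. Regard the unit group Fˣ as a ℤ-module and form the tensor products L ⊗_ℤ Fˣ and Y ⊗_ℤ Fˣ. Let f : L ⊗_ℤ Fˣ → Y ⊗_ℤ Fˣ be the map induced by the inclusion L ↪ Y, and let g : Y ⊗_ℤ Fˣ → L ⊗_ℤ Fˣ be the map induced by the homomorphism Y → L, y ↦ n·y. Then the kernel of f equals the image under g of the n-torsion subgroup {t ∈ Y ⊗_ℤ Fˣ : n·t = 0}; in particular, ker(f) is contained in the image of g. -/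
/-!
By the elementary divisor theorem there is a basis `(e_i)` of `Y` such that `(a_i e_i)` is a basis
of `L`, and `a_i ∣ n` because `n Y ⊆ L`. In these coordinates `L ⊗ Fˣ → Y ⊗ Fˣ` is
`(u_i) ↦ (u_i ^ a_i)` and `Y ⊗ Fˣ → L ⊗ Fˣ` is `(w_i) ↦ (w_i ^ (n / a_i))`, so the kernel of the
first lies in the image of the second once every unit killed by `a ∣ n` is an `n / a`-th power.
That holds because the `n`-th roots of unity form a cyclic group of order `n`. The composite of the
two maps is multiplication by `n`, which upgrades `ker ⊆ im` to the equality with the image of the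
`n`-torsion.
-/

open scoped TensorProduct

theorem IsPrimitiveRoot.exists_zpow_eq_of_zpow_eq_one {R : Type*} [CommRing R] [IsDomain R]
    {n : ℕ} [NeZero n] {μ : Rˣ} (hμ : IsPrimitiveRoot μ n) {a c : ℤ} (hac : a * c = n)
    {ζ : Rˣ} (hζ : ζ ^ a = 1) : ∃ ω : Rˣ, ω ^ c = ζ := by
  have ha : a ≠ 0 := by
    rintro rfl
    rw [zero_mul, eq_comm, Nat.cast_eq_zero] at hac
    exact NeZero.ne n hac
  have hζn : ζ ∈ rootsOfUnity n R := by
    rw [mem_rootsOfUnity, ← zpow_natCast, ← hac, zpow_mul, hζ, one_zpow]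
  obtain ⟨k, rfl⟩ := Subgroup.mem_zpowers_iff.mp (hμ.zpowers_eq ▸ hζn)
  obtain ⟨t, rfl⟩ : c ∣ k := by
    rw [← zpow_mul, hμ.zpow_eq_one_iff_dvd, ← hac, mul_comm k] at hζ
    exact (mul_dvd_mul_iff_left ha).mp hζ
  exact ⟨μ ^ t, by rw [← zpow_mul, mul_comm]⟩

theorem exists_isPrimitiveRoot_of_natCard_pow_eq_one {F : Type*} [Field F] {n : ℕ} (hn : 0 < n)
    (hμ : Nat.card {x : F // x ^ n = 1} = n) : ∃ μ : Fˣ, IsPrimitiveRoot μ n := by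
  have : NeZero n := ⟨hn.ne'⟩
  have hcard : Nat.card (rootsOfUnity n F) = n :=
    (Nat.card_congr ((rootsOfUnityEquivNthRoots F n).trans
      (Equiv.subtypeEquivRight fun _ => Polynomial.mem_nthRoots hn))).trans hμ
  obtain ⟨ζ, hζ⟩ := card_rootsOfUnity_eq_iff_exists_isPrimitiveRoot.mp hcard
  exact ⟨(hζ.isUnit hn.ne').unit, IsPrimitiveRoot.coe_units_iff.mp hζ⟩

theorem Module.Basis.repr_map_apply_of_diagonal {R P Q κ : Type*} [CommSemiring R]
    [AddCommMonoid P] [Module R P] [AddCommMonoid Q] [Module R Q]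
    (bP : Basis κ R P) (bQ : Basis κ R Q) {φ : P →ₗ[R] Q} {d : κ → R}
    (hφ : ∀ i, φ (bP i) = d i • bQ i) (p : P) (i : κ) :
    bQ.repr (φ p) i = d i * bP.repr p i := by
  classical
  have : bQ.coord i ∘ₗ φ = d i • bP.coord i := bP.ext fun j => by
    by_cases hij : j = i
    · subst hij; simp [hφ]
    · simp [hφ, hij]
  exact congr($this p)

theorem TensorProduct.equivFinsuppOfBasisLeft_map_apply_of_diagonal {R P Q M κ : Type*}
    [DecidableEq κ] [CommSemiring R] [AddCommMonoid P] [Module R P] [AddCommMonoid Q] [Module R Q]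
    [AddCommMonoid M] [Module R M]
    (bP : Module.Basis κ R P) (bQ : Module.Basis κ R Q) {φ : P →ₗ[R] Q} {d : κ → R}
    (hφ : ∀ i, φ (bP i) = d i • bQ i) (x : P ⊗[R] M) (i : κ) :
    equivFinsuppOfBasisLeft bQ (map φ LinearMap.id x) i =
      d i • equivFinsuppOfBasisLeft bP x i := by
  induction x using TensorProduct.induction_on with
  | zero => simp
  | tmul p m =>
    simp only [map_tmul, LinearMap.id_coe, id_eq, equivFinsuppOfBasisLeft_apply_tmul_apply,
      bP.repr_map_apply_of_diagonal bQ hφ, mul_smul]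
  | add x y hx hy => simp only [map_add, Finsupp.add_apply, hx, hy, smul_add]

theorem TensorProduct.ker_map_le_range_map_of_diagonal {R P Q M κ : Type*} [Finite κ]
    [CommSemiring R] [AddCommMonoid P] [Module R P] [AddCommMonoid Q] [Module R Q]
    [AddCommMonoid M] [Module R M]
    (bP : Module.Basis κ R P) (bQ : Module.Basis κ R Q) {φ : P →ₗ[R] Q} {ψ : Q →ₗ[R] P}
    {d e : κ → R} (hφ : ∀ i, φ (bP i) = d i • bQ i) (hψ : ∀ i, ψ (bQ i) = e i • bP i)
    (hM : ∀ i (u : M), d i • u = 0 → ∃ w, e i • w = u) :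
    LinearMap.ker (map φ (LinearMap.id : M →ₗ[R] M)) ≤
      LinearMap.range (map ψ (LinearMap.id : M →ₗ[R] M)) := by
  classical
  intro x hx
  have hcoord i : d i • equivFinsuppOfBasisLeft bP x i = 0 := by
    rw [← equivFinsuppOfBasisLeft_map_apply_of_diagonal bP bQ hφ, LinearMap.mem_ker.mp hx,
      map_zero, Finsupp.zero_apply]
  choose w hw using fun i => hM i _ (hcoord i)
  refine ⟨(equivFinsuppOfBasisLeft bQ).symm (Finsupp.equivFunOnFinite.symm w),
    (equivFinsuppOfBasisLeft bP).injective (Finsupp.ext fun i => ?_)⟩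
  rw [equivFinsuppOfBasisLeft_map_apply_of_diagonal bQ bP hψ, LinearEquiv.apply_symm_apply,
    Finsupp.equivFunOnFinite_symm_apply_apply, hw]

theorem Submodule.exists_basis_smul_basis_of_smul_mem {R M : Type*} [CommRing R] [IsDomain R]
    [IsPrincipalIdealRing R] [AddCommGroup M] [Module R M] [Module.Free R M] [Module.Finite R M]
    (N : Submodule R M) {r : R} (hr : r ≠ 0) (hN : ∀ y, r • y ∈ N) :
    ∃ (bM : Module.Basis (Module.Free.ChooseBasisIndex R M) R M)
      (bN : Module.Basis (Module.Free.ChooseBasisIndex R M) R N)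
      (a c : Module.Free.ChooseBasisIndex R M → R),
      (∀ i, (bN i : M) = a i • bM i) ∧ ∀ i, a i * c i = r := by
  have hrank : Module.finrank R N = Module.finrank R M :=
    (Submodule.finrank_le N).antisymm <| LinearMap.finrank_le_finrank_of_injective
      (f := LinearMap.codRestrict N (r • LinearMap.id) hN) fun _ _ hxy =>
        smul_right_injective M hr (by simpa using congr(($hxy : M)))
  obtain ⟨bM, a, bN, h⟩ := exists_smith_normal_form_of_rank_eq (Module.Free.chooseBasis R M) hrank
  refine ⟨bM, bN, a, fun i => bN.repr ⟨r • bM i, hN _⟩ i, h, fun i => ?_⟩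
  simpa using (bN.repr_map_apply_of_diagonal bM (φ := N.subtype) h ⟨r • bM i, hN _⟩ i).symm

/-- The kernel of the isogeny `T_{Q,n} → T` on `F`-points equals the image of the
`n`-torsion of `T` under the isogeny `T → T_{Q,n}`, where tori are expressed via
their cocharacter lattices tensored with `Fˣ`.  Here `Y` is a free `ℤ`-module of
finite rank, `L ⊆ Y` is a subgroup (= `ℤ`-submodule) containing `n • Y`, and `Fˣ`
is regarded as a `ℤ`-module via `Additive`. -/
theorem stmt_0 (F : Type*) [Field F] (n : ℕ) (hn : 0 < n)
    (hμ : Nat.card {x : F // x ^ n = 1} = n)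
    (Y : Type*) [AddCommGroup Y] [Module.Free ℤ Y] [Module.Finite ℤ Y]
    (L : AddSubgroup Y) (hL : ∀ y : Y, (n : ℤ) • y ∈ L)
    (ι : Y →ₗ[ℤ] L) (hι : ∀ y : Y, (ι y : Y) = (n : ℤ) • y) :
    LinearMap.ker (TensorProduct.map (AddSubgroup.subtype L).toIntLinearMap
        (LinearMap.id : Additive Fˣ →ₗ[ℤ] Additive Fˣ)) =
      Submodule.map (TensorProduct.map ι (LinearMap.id : Additive Fˣ →ₗ[ℤ] Additive Fˣ))
        (Submodule.torsionBy ℤ (Y ⊗[ℤ] Additive Fˣ) (n : ℤ)) ∧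
    LinearMap.ker (TensorProduct.map (AddSubgroup.subtype L).toIntLinearMap
        (LinearMap.id : Additive Fˣ →ₗ[ℤ] Additive Fˣ)) ≤
      LinearMap.range (TensorProduct.map ι
        (LinearMap.id : Additive Fˣ →ₗ[ℤ] Additive Fˣ)) := by
  have : NeZero n := ⟨hn.ne'⟩
  obtain ⟨μ, hμprim⟩ := exists_isPrimitiveRoot_of_natCard_pow_eq_one hn hμ
  obtain ⟨bY, bL, a, c, hbL, hac⟩ :=
    (AddSubgroup.toIntSubmodule L).exists_basis_smul_basis_of_smul_mem
      (Int.natCast_ne_zero.mpr hn.ne') hL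
  -- `AddSubgroup.toIntSubmodule L` and `L` have definitionally equal carriers
  let bL' : Module.Basis _ ℤ L := bL
  have hιb i : ι (bY i) = c i • bL' i := Subtype.ext <| by
    rw [hι, ← hac, mul_comm, mul_smul, AddSubgroup.coe_zsmul, ← hbL]
    rfl
  have hroot i (u : Additive Fˣ) (hu : a i • u = 0) : ∃ w, c i • w = u := by
    obtain ⟨ω, hω⟩ := hμprim.exists_zpow_eq_of_zpow_eq_one (hac i) (ζ := u.toMul)
      (by rw [← toMul_zsmul, hu, toMul_zero])
    exact ⟨Additive.ofMul ω, by rw [← ofMul_zpow, hω, ofMul_toMul]⟩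
  have hker := TensorProduct.ker_map_le_range_map_of_diagonal bL' bY
    (M := Additive Fˣ) (φ := (AddSubgroup.subtype L).toIntLinearMap) hbL hιb hroot
  have hcomp (t : Y ⊗[ℤ] Additive Fˣ) :
      TensorProduct.map (AddSubgroup.subtype L).toIntLinearMap LinearMap.id
        (TensorProduct.map ι LinearMap.id t) = (n : ℤ) • t := by
    induction t using TensorProduct.induction_on with
    | zero => simp
    | tmul y u => simp [hι, TensorProduct.smul_tmul']
    | add s t hs ht => simp [hs, ht]
  refine ⟨le_antisymm (fun x hx => ?_) ?_, hker⟩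
  · obtain ⟨t, rfl⟩ := hker hx
    exact ⟨t, (Submodule.mem_torsionBy_iff _ _).mpr ((hcomp t).symm.trans hx), rfl⟩
  · rintro _ ⟨t, ht, rfl⟩
    exact (hcomp t).trans ((Submodule.mem_torsionBy_iff _ _).mp ht)
end

section
/- Let Y be a free ℤ-module of finite rank, (α, α∨) a root/coroot pair (α ∈ Hom_ℤ(Y,ℤ), α∨ ∈ Y, ⟨α, α∨⟩ = 2), and Q : Y → ℤ a quadratic form invariant under the reflection s_α(y) = y − ⟨α, y⟩·α∨. Fix a positive integer n and set n_α := n / gcd(n, Q(α∨)) and Y_{Q,n} := {y ∈ Y : n divides B_Q(y, z) for all z ∈ Y}. Then for every y ∈ Y_{Q,n}, the integer n_α divides ⟨α, y⟩. -/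
/-!
Expanding the invariance `Q (y - ⟨α, y⟩ • α∨) = Q y` gives `B_Q(y, α∨) = ⟨α, y⟩ * Q(α∨)` whenever
`⟨α, y⟩ ≠ 0`. Hence `n ∣ ⟨α, y⟩ * Q(α∨)`, and dividing out `gcd(n, Q(α∨))` leaves `n_α ∣ ⟨α, y⟩`.
-/

theorem Int.ediv_gcd_dvd_of_dvd_mul {n a q : ℤ} (hn : n ≠ 0) (h : n ∣ a * q) :
    n / n.gcd q ∣ a := by
  have hcop : IsCoprime (n / n.gcd q) (q / n.gcd q) :=
    Int.isCoprime_iff_gcd_eq_one.mpr (Int.gcd_div_gcd_div_gcd (Int.gcd_pos_of_ne_zero_left q hn))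
  refine hcop.dvd_of_dvd_mul_right ?_
  rw [← Int.mul_ediv_assoc a (Int.gcd_dvd_right n q)]
  exact Int.ediv_dvd_ediv (Int.gcd_dvd_left n q) h

theorem QuadraticMap.map_sub_smul {R M : Type*} [CommRing R] [AddCommGroup M] [Module R M]
    (Q : QuadraticMap R M R) (y v : M) (c : R) :
    Q (y - c • v) = Q y - c * polar Q y v + c * c * Q v := by
  rw [sub_eq_add_neg, ← neg_smul, QuadraticMap.map_add Q, QuadraticMap.map_smul,
    QuadraticMap.polar_smul_right, smul_eq_mul, smul_eq_mul]
  ring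

theorem QuadraticMap.polar_eq_mul_of_map_sub_smul_eq {R M : Type*} [CommRing R] [NoZeroDivisors R]
    [AddCommGroup M] [Module R M] (Q : QuadraticMap R M R) {y v : M} {c : R}
    (h : Q (y - c • v) = Q y) (hc : c ≠ 0) : polar Q y v = c * Q v := by
  rw [map_sub_smul] at h
  have : c * (c * Q v - polar Q y v) = 0 := by linear_combination h
  exact (sub_eq_zero.mp ((mul_eq_zero.mp this).resolve_left hc)).symm

theorem stmt_2_general (Y : Type*) [AddCommGroup Y] [Module ℤ Y]
    (Q : QuadraticForm ℤ Y) (α : Y →ₗ[ℤ] ℤ) (αv : Y)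
    (hW : ∀ y : Y, Q (y - α y • αv) = Q y)
    (n : ℕ) (hn : 0 < n) (y : Y)
    (hy : ∀ z : Y, (n : ℤ) ∣ QuadraticMap.polar (⇑Q) y z) :
    ((n / Int.gcd (n : ℤ) (Q αv) : ℕ) : ℤ) ∣ α y := by
  rcases eq_or_ne (α y) 0 with hα | hα
  · simp [hα]
  have hWy := hW y
  -- the `•` in `hW` is the `zsmul` of `AddCommGroup Y`, not the action of `Module ℤ Y`
  rw [← Int.cast_smul_eq_zsmul ℤ, Int.cast_id] at hWy
  have hpolar := Q.polar_eq_mul_of_map_sub_smul_eq hWy hα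
  rw [Int.natCast_ediv]
  exact Int.ediv_gcd_dvd_of_dvd_mul (by exact_mod_cast hn.ne') (hpolar ▸ hy αv)

/-- Let `(α, α∨)` be a root/coroot pair and `Q` a reflection-invariant `ℤ`-valued
quadratic form on the lattice `Y`.  For a positive integer `n`, set
`n_α = n / gcd(n, Q(α∨))` and `Y_{Q,n} = {y : n ∣ B_Q(y, z) for all z}`.
Then `n_α ∣ ⟨α, y⟩` for every `y ∈ Y_{Q,n}`. -/
theorem stmt_2 (Y : Type*) [AddCommGroup Y] [Module ℤ Y]
    [Module.Free ℤ Y] [Module.Finite ℤ Y]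
    (Q : QuadraticForm ℤ Y) (α : Y →ₗ[ℤ] ℤ) (αv : Y)
    (hpair : α αv = 2)
    (hW : ∀ y : Y, Q (y - α y • αv) = Q y)
    (n : ℕ) (hn : 0 < n) (y : Y)
    (hy : ∀ z : Y, (n : ℤ) ∣ QuadraticMap.polar (⇑Q) y z) :
    ((n / Int.gcd (n : ℤ) (Q αv) : ℕ) : ℤ) ∣ α y :=
  stmt_2_general Y Q α αv hW n hn y hy
end

section
/- Let Y be a free ℤ-module of finite rank and (α_i, α_i∨), i ∈ I a finite family of root/coroot pairs (α_i ∈ Hom_ℤ(Y,ℤ), α_i∨ ∈ Y, ⟨α_i, α_i∨⟩ = 2). Let Q : Y → ℤ be a quadratic form invariant under every reflection s_{α_i}(y) = y − ⟨α_i, y⟩·α_i∨. Fix a positive integer n, set n_{α_i} := n / gcd(n, Q(α_i∨)), Y_{Q,n} := {y ∈ Y : n | B_Q(y, z) for all z ∈ Y}, Y_{Q,n}^{sc} := the ℤ-span of {n_{α_i}·α_i∨ : i ∈ I}, and J := n·Y + Y_{Q,n}^{sc}. Then J ⊆ Y_{Q,n}, and n divides Q(y) for every y ∈ J. -/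
/-!
Write `c = ⟨α, y⟩` and `v = α∨`. Expanding `Q (y - c • v) = Q y` gives
`c * B_Q(y, v) = c² * Q v`; replacing `y` by `y + v` shifts `c` by `⟨α, v⟩ = 2`, and subtracting
the two identities leaves `2 * B_Q(v, y) = 2 * c * Q v`. So `Q(α∨)` divides `B_Q(α∨, ·)`, and
since `n ∣ n_α * Q(α∨)` the modified coroot `n_α • α∨` lies in the submodule
`{y : n ∣ B_Q(y, ·) and n ∣ Q y}`, which plainly contains `n • Y`.
-/

namespace QuadraticMap

variable {R M : Type*} [CommRing R] [AddCommGroup M] [Module R M]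

lemma map_add_eq_add_polar (Q : QuadraticForm R M) (x y : M) :
    Q (x + y) = Q x + Q y + polar Q x y := by
  rw [polar]; abel

lemma map_sub_smul_s3 (Q : QuadraticForm R M) (c : R) (x v : M) :
    Q (x - c • v) = Q x - c * polar Q x v + c ^ 2 * Q v := by
  rw [sub_eq_add_neg, ← neg_smul, map_add_eq_add_polar, polar_smul_right, Q.map_smul,
    smul_eq_mul, smul_eq_mul]
  ring

theorem polar_eq_mul_of_reflection_invariant [NoZeroDivisors R] [NeZero (2 : R)]
    (Q : QuadraticForm R M) {α : M →ₗ[R] R} {v : M} (hv : α v = 2)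
    (hQ : ∀ y, Q (y - α y • v) = Q y) (y : M) :
    polar Q v y = α y * Q v := by
  have key : ∀ y, α y * polar Q y v = α y ^ 2 * Q v := fun y => by
    have := hQ y
    rw [map_sub_smul_s3] at this
    linear_combination -this
  have h₁ := key y
  have h₂ := key (y + v)
  rw [map_add, hv, polar_add_left, polar_self, two_smul] at h₂
  rw [polar_comm]
  exact mul_left_cancel₀ (two_ne_zero (α := R)) (by linear_combination h₂ - h₁)

/-- `{y ∈ Y_{Q,n} : n ∣ Q y}` in the notation of the statement. -/
def dvdSubmodule (Q : QuadraticForm R M) (n : R) : Submodule R M where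
  carrier := {y | (∀ z, n ∣ polar Q y z) ∧ n ∣ Q y}
  zero_mem' := ⟨fun z => by simp [polar_zero_left], by simp⟩
  add_mem' := by
    rintro a b ⟨ha, ha'⟩ ⟨hb, hb'⟩
    refine ⟨fun z => ?_, ?_⟩
    · rw [polar_add_left]; exact dvd_add (ha z) (hb z)
    · rw [map_add_eq_add_polar]; exact dvd_add (dvd_add ha' hb') (ha b)
  smul_mem' := by
    rintro c a ⟨ha, ha'⟩
    refine ⟨fun z => ?_, ?_⟩
    · rw [polar_smul_left, smul_eq_mul]; exact dvd_mul_of_dvd_right (ha z) c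
    · rw [Q.map_smul, smul_eq_mul]; exact dvd_mul_of_dvd_right ha' _

variable {Q : QuadraticForm R M} {n : R}

lemma smul_mem_dvdSubmodule (x : M) : n • x ∈ Q.dvdSubmodule n := by
  refine ⟨fun z => ?_, ?_⟩
  · rw [polar_smul_left, smul_eq_mul]; exact dvd_mul_right n _
  · rw [Q.map_smul, smul_eq_mul, mul_assoc]; exact dvd_mul_right n _

lemma smul_mem_dvdSubmodule_of_dvd_polar {v : M} {m : R} (hv : ∀ z, Q v ∣ polar Q v z)
    (hm : n ∣ m * Q v) : m • v ∈ Q.dvdSubmodule n := by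
  refine ⟨fun z => ?_, ?_⟩
  · rw [polar_smul_left, smul_eq_mul]; exact hm.trans (mul_dvd_mul_left m (hv z))
  · rw [Q.map_smul, smul_eq_mul, mul_assoc]; exact hm.mul_left m

end QuadraticMap

lemma Int.dvd_div_gcd_mul (n : ℕ) (q : ℤ) : (n : ℤ) ∣ ((n / Int.gcd n q : ℕ) : ℤ) * q := by
  obtain ⟨k, hk⟩ := Int.gcd_dvd_right (n : ℤ) q
  have hg : Int.gcd n q ∣ n := Int.ofNat_dvd.mp (Int.gcd_dvd_left _ _)
  refine ⟨k, ?_⟩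
  nth_rw 2 [hk]
  rw [← mul_assoc, ← Nat.cast_mul, Nat.div_mul_cancel hg]

open QuadraticMap in
theorem stmt_3_general (Y : Type*) [AddCommGroup Y] [Module ℤ Y]
    (Q : QuadraticForm ℤ Y) (I : Type*)
    (α : I → (Y →ₗ[ℤ] ℤ)) (αv : I → Y)
    (hpair : ∀ i, α i (αv i) = 2)
    (hW : ∀ (i : I) (y : Y), Q (y - α i y • αv i) = Q y)
    (n : ℕ) :
    ∀ y ∈ (LinearMap.range ((n : ℤ) • (LinearMap.id : Y →ₗ[ℤ] Y)) ⊔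
        Submodule.span ℤ
          (Set.range fun i : I => ((n / Int.gcd (n : ℤ) (Q (αv i)) : ℕ) : ℤ) • αv i)),
      (∀ z : Y, (n : ℤ) ∣ QuadraticMap.polar (⇑Q) y z) ∧ (n : ℤ) ∣ Q y := by
  -- The `•` on `Y` in the statement is `zsmul`, not the given `Module ℤ Y`; the two agree
  -- because a `ℤ`-module structure is unique.
  obtain rfl : ‹Module ℤ Y› = AddCommGroup.toIntModule Y := Subsingleton.elim _ _
  suffices hJ : LinearMap.range ((n : ℤ) • (LinearMap.id : Y →ₗ[ℤ] Y)) ⊔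
      Submodule.span ℤ (Set.range fun i : I => ((n / Int.gcd (n : ℤ) (Q (αv i)) : ℕ) : ℤ) • αv i)
        ≤ Q.dvdSubmodule n from fun y hy => hJ hy
  refine sup_le ?_ (Submodule.span_le.2 ?_)
  · rintro _ ⟨x, rfl⟩
    exact smul_mem_dvdSubmodule x
  · rintro _ ⟨i, rfl⟩
    have hpolar := polar_eq_mul_of_reflection_invariant Q (hpair i) (hW i)
    exact smul_mem_dvdSubmodule_of_dvd_polar (fun z => ⟨α i z, by rw [hpolar, mul_comm]⟩)
      (Int.dvd_div_gcd_mul n _)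

/-- Let `Q` be a `ℤ`-valued quadratic form on a lattice `Y`, invariant under the
reflections of a finite family of root/coroot pairs `(α_i, α_i∨)`.  With
`Y_{Q,n} = {y : n ∣ B_Q(y, z) for all z}`, `Y_{Q,n}^{sc}` the span of the modified
coroots `n_{α_i} • α_i∨` (where `n_{α_i} = n / gcd(n, Q(α_i∨))`), and
`J = n·Y + Y_{Q,n}^{sc}`, one has `J ⊆ Y_{Q,n}` and `n ∣ Q(y)` for all `y ∈ J`. -/
theorem stmt_3 (Y : Type*) [AddCommGroup Y] [Module ℤ Y]
    [Module.Free ℤ Y] [Module.Finite ℤ Y]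
    (Q : QuadraticForm ℤ Y) (I : Type*) [Finite I]
    (α : I → (Y →ₗ[ℤ] ℤ)) (αv : I → Y)
    (hpair : ∀ i, α i (αv i) = 2)
    (hW : ∀ (i : I) (y : Y), Q (y - α i y • αv i) = Q y)
    (n : ℕ) (hn : 0 < n) :
    ∀ y ∈ (LinearMap.range ((n : ℤ) • (LinearMap.id : Y →ₗ[ℤ] Y)) ⊔
        Submodule.span ℤ
          (Set.range fun i : I => ((n / Int.gcd (n : ℤ) (Q (αv i)) : ℕ) : ℤ) • αv i)),
      (∀ z : Y, (n : ℤ) ∣ QuadraticMap.polar (⇑Q) y z) ∧ (n : ℤ) ∣ Q y :=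
  stmt_3_general Y Q I α αv hpair hW n
end

section
/- Let r ≥ 2 and let B be the r×r symmetric integer matrix with B_{ii} = 2 for 1 ≤ i ≤ r−1, B_{rr} = 4, B_{i,i+1} = B_{i+1,i} = −1 for 1 ≤ i ≤ r−2, B_{r−1,r} = B_{r,r−1} = −2, and all other entries 0. Then for v ∈ ℤ^r: (a) if r is odd, all coordinates of B·v are even if and only if v_i is even for every i ≤ r−1 (with v_r unconstrained); (b) if r is even, all coordinates of B·v are even if and only if v_i is even for every even index i ≤ r−2 and v_1 ≡ v_3 ≡ … ≡ v_{r−1} (mod 2) (with v_r unconstrained). -/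
/-- For the Gram matrix `B` of `B_Q` on the coroot lattice of type `B_r`
(0-based: `B i i = 2` for `i < r-1`, `B (r-1) (r-1) = 4`, consecutive
off-diagonal entries `-1`, except `-2` between `r-2` and `r-1`):
(a) if `r` is odd then `B·v ≡ 0 (mod 2)` iff `v i` is even for all `i < r-1`;
(b) if `r` is even then `B·v ≡ 0 (mod 2)` iff `v i` is even for every odd
(0-based) index `i < r-1` and all the coordinates at even (0-based) indices are
congruent mod 2. -/
theorem stmt_10 (r : ℕ) (hr : 2 ≤ r)
    (B : Matrix (Fin r) (Fin r) ℤ)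
    (hB : ∀ i j : Fin r, B i j =
      if (i : ℕ) = (j : ℕ) then (if (i : ℕ) = r - 1 then 4 else 2)
      else if (i : ℕ) + 1 = (j : ℕ) ∨ (j : ℕ) + 1 = (i : ℕ) then
        (if (i : ℕ) = r - 1 ∨ (j : ℕ) = r - 1 then -2 else -1)
      else 0)
    (v : Fin r → ℤ) :
    (Odd r →
      ((∀ i, 2 ∣ B.mulVec v i) ↔ (∀ i : Fin r, (i : ℕ) < r - 1 → 2 ∣ v i))) ∧
    (Even r →
      ((∀ i, 2 ∣ B.mulVec v i) ↔
        ((∀ i : Fin r, Odd (i : ℕ) → (i : ℕ) < r - 1 → 2 ∣ v i) ∧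
          (∀ i j : Fin r, Even (i : ℕ) → Even (j : ℕ) → v i % 2 = v j % 2)))) := by
  classical
  have hchar : ∀ a b : ZMod 2, a + b = 0 ↔ a = b := by decide
  -- the reduction of `v` mod 2, indexed by naturals
  set W : ℕ → ZMod 2 := fun k => if h : k < r then ((v ⟨k, h⟩ : ℤ) : ZMod 2) else 0 with hWdef
  have hWv : ∀ i : Fin r, W (i : ℕ) = ((v i : ℤ) : ZMod 2) := by
    intro i; simp only [hWdef, i.isLt, dif_pos, Fin.eta]
  have hdvdW : ∀ i : Fin r, (2 ∣ v i ↔ W (i : ℕ) = 0) := by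
    intro i
    rw [hWv, ZMod.intCast_zmod_eq_zero_iff_dvd]
    norm_num
  have hmodW : ∀ i j : Fin r, (v i % 2 = v j % 2 ↔ W (i : ℕ) = W (j : ℕ)) := by
    intro i j
    rw [hWv, hWv, ZMod.intCast_eq_intCast_iff]
    exact Iff.rfl.symm
  -- reduction of B mod 2
  have hB2 : ∀ i j : Fin r, ((B i j : ℤ) : ZMod 2) =
      if ((i:ℕ)+1 = (j:ℕ) ∨ (j:ℕ)+1 = (i:ℕ)) ∧ (i:ℕ) ≠ r-1 ∧ (j:ℕ) ≠ r-1 then 1 else 0 := by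
    intro i j
    rw [hB]
    split_ifs <;> first | rfl | decide | tauto | (exfalso; omega)
  -- the row sums mod 2
  have hrow : ∀ i : Fin r, (2 ∣ B.mulVec v i ↔
      (∑ j : Fin r, if ((i:ℕ)+1 = (j:ℕ) ∨ (j:ℕ)+1 = (i:ℕ)) ∧ (i:ℕ) ≠ r-1 ∧ (j:ℕ) ≠ r-1
        then W (j:ℕ) else 0) = 0) := by
    intro i
    have h0 : (((2:ℕ):ℤ)) ∣ B.mulVec v i ↔ ((B.mulVec v i : ℤ) : ZMod 2) = 0 :=
      (ZMod.intCast_zmod_eq_zero_iff_dvd (B.mulVec v i) 2).symm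
    rw [show ((2:ℕ):ℤ) = 2 by norm_num] at h0
    rw [h0, Matrix.mulVec, dotProduct]
    have hcast : ((∑ j : Fin r, B i j * v j : ℤ) : ZMod 2)
        = ∑ j : Fin r, ((B i j : ℤ) : ZMod 2) * ((v j : ℤ) : ZMod 2) := by
      push_cast; rfl
    rw [hcast]
    have : ∀ j : Fin r, ((B i j : ℤ) : ZMod 2) * ((v j : ℤ) : ZMod 2)
        = if ((i:ℕ)+1 = (j:ℕ) ∨ (j:ℕ)+1 = (i:ℕ)) ∧ (i:ℕ) ≠ r-1 ∧ (j:ℕ) ≠ r-1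
          then W (j:ℕ) else 0 := by
      intro j
      rw [hB2 i j, hWv]
      split_ifs <;> ring
    rw [Finset.sum_congr rfl fun j _ => this j]
  -- evaluation of the row sums
  have hsum0 : ∀ i : Fin r, ((i:ℕ) = r-1 ∨ r = 2) →
      (∑ j : Fin r, if ((i:ℕ)+1 = (j:ℕ) ∨ (j:ℕ)+1 = (i:ℕ)) ∧ (i:ℕ) ≠ r-1 ∧ (j:ℕ) ≠ r-1
        then W (j:ℕ) else 0) = 0 := by
    intro i hi
    refine Finset.sum_eq_zero fun j _ => if_neg ?_
    have h1 := i.isLt; have h2 := j.isLt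
    omega
  have hsum1a : ∀ i : Fin r, (i:ℕ) = 0 → 3 ≤ r →
      (∑ j : Fin r, if ((i:ℕ)+1 = (j:ℕ) ∨ (j:ℕ)+1 = (i:ℕ)) ∧ (i:ℕ) ≠ r-1 ∧ (j:ℕ) ≠ r-1
        then W (j:ℕ) else 0) = W 1 := by
    intro i h1 h2
    rw [← Finset.sum_filter]
    have hset : Finset.univ.filter
        (fun j : Fin r => ((i:ℕ)+1 = (j:ℕ) ∨ (j:ℕ)+1 = (i:ℕ)) ∧ (i:ℕ) ≠ r-1 ∧ (j:ℕ) ≠ r-1)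
        = {⟨1, by omega⟩} := by
      ext j
      simp [Fin.ext_iff]
      omega
    rw [hset, Finset.sum_singleton]
  have hsum1b : ∀ i : Fin r, (i:ℕ) = r-2 → 3 ≤ r →
      (∑ j : Fin r, if ((i:ℕ)+1 = (j:ℕ) ∨ (j:ℕ)+1 = (i:ℕ)) ∧ (i:ℕ) ≠ r-1 ∧ (j:ℕ) ≠ r-1
        then W (j:ℕ) else 0) = W (r-3) := by
    intro i h1 h2
    rw [← Finset.sum_filter]
    have hset : Finset.univ.filter
        (fun j : Fin r => ((i:ℕ)+1 = (j:ℕ) ∨ (j:ℕ)+1 = (i:ℕ)) ∧ (i:ℕ) ≠ r-1 ∧ (j:ℕ) ≠ r-1)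
        = {⟨r-3, by omega⟩} := by
      ext j
      simp [Fin.ext_iff]
      omega
    rw [hset, Finset.sum_singleton]
  have hsum2 : ∀ i : Fin r, 0 < (i:ℕ) → (i:ℕ) < r-2 →
      (∑ j : Fin r, if ((i:ℕ)+1 = (j:ℕ) ∨ (j:ℕ)+1 = (i:ℕ)) ∧ (i:ℕ) ≠ r-1 ∧ (j:ℕ) ≠ r-1
        then W (j:ℕ) else 0) = W ((i:ℕ)-1) + W ((i:ℕ)+1) := by
    intro i h1 h2
    rw [← Finset.sum_filter]
    have hset : Finset.univ.filter
        (fun j : Fin r => ((i:ℕ)+1 = (j:ℕ) ∨ (j:ℕ)+1 = (i:ℕ)) ∧ (i:ℕ) ≠ r-1 ∧ (j:ℕ) ≠ r-1)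
        = {⟨(i:ℕ)-1, by omega⟩, ⟨(i:ℕ)+1, by omega⟩} := by
      ext j
      simp [Fin.ext_iff]
      omega
    rw [hset, Finset.sum_pair (by simp only [ne_eq, Fin.mk.injEq]; omega)]
  -- the key intermediate characterisation
  have key : (∀ i, 2 ∣ B.mulVec v i) ↔
      ((3 ≤ r → W 1 = 0 ∧ W (r-3) = 0) ∧ ∀ k, k + 2 ≤ r - 2 → W k = W (k+2)) := by
    constructor
    · intro H
      have H' : ∀ i : Fin r, (∑ j : Fin r,
          if ((i:ℕ)+1 = (j:ℕ) ∨ (j:ℕ)+1 = (i:ℕ)) ∧ (i:ℕ) ≠ r-1 ∧ (j:ℕ) ≠ r-1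
            then W (j:ℕ) else 0) = 0 := fun i => (hrow i).mp (H i)
      constructor
      · intro h3
        constructor
        · have := H' ⟨0, by omega⟩
          rwa [hsum1a ⟨0, by omega⟩ rfl h3] at this
        · have := H' ⟨r-2, by omega⟩
          rwa [hsum1b ⟨r-2, by omega⟩ rfl h3] at this
      · intro k hk
        have := H' ⟨k+1, by omega⟩
        rw [hsum2 ⟨k+1, by omega⟩ (by simp) (by simp; omega)] at this
        have hk1 : ((⟨k+1, by omega⟩ : Fin r) : ℕ) - 1 = k := by simp
        have hk2 : ((⟨k+1, by omega⟩ : Fin r) : ℕ) + 1 = k + 2 := by simp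
        rw [hk1, hk2] at this
        exact (hchar _ _).mp this
    · rintro ⟨h1, h2⟩ i
      rw [hrow]
      have hi := i.isLt
      by_cases hA : (i:ℕ) = r-1 ∨ r = 2
      · exact hsum0 i hA
      · push_neg at hA
        have h3 : 3 ≤ r := by omega
        by_cases hBc : (i:ℕ) = r-2
        · rw [hsum1b i hBc h3]; exact (h1 h3).2
        · by_cases hC : (i:ℕ) = 0
          · rw [hsum1a i hC h3]; exact (h1 h3).1
          · rw [hsum2 i (by omega) (by omega)]
            have := h2 ((i:ℕ)-1) (by omega)
            rw [show (i:ℕ)-1+2 = (i:ℕ)+1 by omega] at this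
            rw [← this]
            exact (hchar _ _).mpr rfl
  -- propagate the chain condition
  have hprop : (∀ k, k + 2 ≤ r - 2 → W k = W (k+2)) →
      ∀ a b, a ≤ b → b ≤ r - 2 → (b - a) % 2 = 0 → W a = W b := by
    intro h2 a b hab hb hpar
    obtain ⟨m, hm⟩ : ∃ m, b = a + 2*m := ⟨(b-a)/2, by omega⟩
    subst hm
    clear hab hpar
    induction m with
    | zero => simp
    | succ n ih =>
      have h1 : W a = W (a + 2*n) := ih (by omega)
      have h2' : W (a + 2*n) = W (a + 2*n + 2) := h2 (a + 2*n) (by omega)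
      rw [h1, h2', show a + 2*n + 2 = a + 2*(n+1) by ring]
  constructor
  · -- r odd
    intro hodd
    have hodd' : r % 2 = 1 := Nat.odd_iff.mp hodd
    have h3 : 3 ≤ r := by omega
    rw [key]
    constructor
    · rintro ⟨h1, h2⟩ i hilt
      rw [hdvdW]
      obtain ⟨hW1, hWr3⟩ := h1 h3
      by_cases hp : (i:ℕ) % 2 = 1
      · rw [← hprop h2 1 (i:ℕ) (by omega) (by omega) (by omega)]
        exact hW1
      · rcases Nat.eq_zero_or_pos ((i:ℕ)) with h0 | h0
        · rw [h0, hprop h2 0 (r-3) (by omega) (by omega) (by omega)]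
          exact hWr3
        · rcases le_total (i:ℕ) (r-3) with hle | hle
          · rw [hprop h2 (i:ℕ) (r-3) hle (by omega) (by omega)]
            exact hWr3
          · rw [← hprop h2 (r-3) (i:ℕ) hle (by omega) (by omega)]
            exact hWr3
    · intro h
      have hz : ∀ k, k < r - 1 → W k = 0 := by
        intro k hk
        exact (hdvdW ⟨k, by omega⟩).mp (h ⟨k, by omega⟩ hk)
      refine ⟨fun _ => ⟨hz 1 (by omega), hz (r-3) (by omega)⟩, fun k hk => ?_⟩
      rw [hz k (by omega), hz (k+2) (by omega)]
  · -- r even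
    intro heven
    have heven' : r % 2 = 0 := Nat.even_iff.mp heven
    rw [key]
    constructor
    · rintro ⟨h1, h2⟩
      constructor
      · intro i hiodd hilt
        have hio : (i:ℕ) % 2 = 1 := Nat.odd_iff.mp hiodd
        have h3 : 3 ≤ r := by omega
        rw [hdvdW]
        rw [← hprop h2 1 (i:ℕ) (by omega) (by omega) (by omega)]
        exact (h1 h3).1
      · intro i j hie hje
        have hie' : (i:ℕ) % 2 = 0 := Nat.even_iff.mp hie
        have hje' : (j:ℕ) % 2 = 0 := Nat.even_iff.mp hje
        have hi := i.isLt; have hj := j.isLt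
        rw [hmodW]
        rcases le_total (i:ℕ) (j:ℕ) with hle | hle
        · exact hprop h2 (i:ℕ) (j:ℕ) hle (by omega) (by omega)
        · exact (hprop h2 (j:ℕ) (i:ℕ) hle (by omega) (by omega)).symm
    · rintro ⟨h1, h2⟩
      have hz : ∀ k, k % 2 = 1 → k < r - 1 → W k = 0 := by
        intro k hk1 hk2
        exact (hdvdW ⟨k, by omega⟩).mp
          (h1 ⟨k, by omega⟩ (Nat.odd_iff.mpr hk1) hk2)
      constructor
      · intro h3
        have h4 : 4 ≤ r := by omega
        exact ⟨hz 1 rfl (by omega), hz (r-3) (by omega) (by omega)⟩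
      · intro k hk
        by_cases hp : k % 2 = 1
        · rw [hz k hp (by omega), hz (k+2) (by omega) (by omega)]
        · have := (hmodW ⟨k, by omega⟩ ⟨k+2, by omega⟩).mp
            (h2 ⟨k, by omega⟩ ⟨k+2, by omega⟩
              (Nat.even_iff.mpr (show k % 2 = 0 by omega))
              (Nat.even_iff.mpr (show (k+2) % 2 = 0 by omega)))
          exact this
end

section
/- Let n be a positive integer. For all integers k₁, k₂, the following are equivalent: (i) n divides 2k₁ − 3k₂ and n divides −3k₁ + 6k₂; (ii) n divides k₁ and n / gcd(n, 3) divides k₂. -/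
/-!
The Gram matrix `[[2, -3], [-3, 6]]` is row-equivalent over `ℤ` to `diag(1, 3)`, so condition (i)
says `n ∣ k₁` and `n ∣ 3 k₂`; and `n ∣ 3 k₂` iff `n / gcd(n, 3) ∣ k₂`, after cancelling the gcd.
-/

theorem Int.natCast_dvd_natCast_mul_iff_div_gcd_dvd {n m : ℕ} (hm : m ≠ 0) (k : ℤ) :
    (n : ℤ) ∣ m * k ↔ ((n / n.gcd m : ℕ) : ℤ) ∣ k := by
  have hg : 0 < n.gcd m := Nat.gcd_pos_of_pos_right n (Nat.pos_of_ne_zero hm)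
  obtain ⟨n', m', hcop, hn, hm'⟩ := Nat.exists_coprime n m
  generalize n.gcd m = g at hg hn hm' ⊢
  subst hn hm'
  rw [Nat.mul_div_cancel n' hg, Nat.cast_mul, Nat.cast_mul, mul_right_comm (m' : ℤ),
    mul_dvd_mul_iff_right (by exact_mod_cast hg.ne')]
  exact ⟨(Nat.isCoprime_iff_coprime.mpr hcop).dvd_of_dvd_mul_left, fun h => h.mul_left _⟩

theorem dvd_G2_gram_iff_dvd_and_dvd_three_mul {R : Type*} [CommRing R] (n k₁ k₂ : R) :
    (n ∣ 2 * k₁ - 3 * k₂ ∧ n ∣ -3 * k₁ + 6 * k₂) ↔ (n ∣ k₁ ∧ n ∣ 3 * k₂) := by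
  constructor
  · rintro ⟨h₁, h₂⟩
    refine ⟨?_, ?_⟩
    · convert dvd_add (h₁.mul_left 2) h₂ using 1; ring
    · convert dvd_add (h₁.mul_left 3) (h₂.mul_left 2) using 1; ring
  · rintro ⟨h₁, h₂⟩
    refine ⟨dvd_sub (h₁.mul_left 2) h₂, ?_⟩
    convert dvd_add (h₁.mul_left (-3)) (h₂.mul_left 2) using 1; ring

theorem stmt_11_general (n : ℕ) (k₁ k₂ : ℤ) :
    ((n : ℤ) ∣ 2 * k₁ - 3 * k₂ ∧ (n : ℤ) ∣ -3 * k₁ + 6 * k₂) ↔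
      ((n : ℤ) ∣ k₁ ∧ ((n / Nat.gcd n 3 : ℕ) : ℤ) ∣ k₂) := by
  rw [dvd_G2_gram_iff_dvd_and_dvd_three_mul,
    ← Int.natCast_dvd_natCast_mul_iff_div_gcd_dvd three_ne_zero]
  rfl

/-- Type `G₂` computation: `n ∣ 2k₁ − 3k₂` and `n ∣ −3k₁ + 6k₂` iff `n ∣ k₁` and
`n / gcd(n, 3) ∣ k₂`. -/
theorem stmt_11 (n : ℕ) (hn : 0 < n) (k₁ k₂ : ℤ) :
    ((n : ℤ) ∣ 2 * k₁ - 3 * k₂ ∧ (n : ℤ) ∣ -3 * k₁ + 6 * k₂) ↔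
      ((n : ℤ) ∣ k₁ ∧ ((n / Nat.gcd n 3 : ℕ) : ℤ) ∣ k₂) :=
  stmt_11_general n k₁ k₂
end

section
/- Let r and n be positive integers and set c := n / gcd(n, r + 1). For m = (m₁, …, m_r) ∈ ℤ^r, the following are equivalent: (i) n divides m_j + (m₁ + m₂ + … + m_r) for every j ∈ {1, …, r}; (ii) m_i ≡ m_j (mod n) for all i, j, and c divides m_i for all i. -/
/-- `n ∣ (r+1)*x ↔ n/gcd(n,r+1) ∣ x`. -/
lemma aux_dvd_iff (r n : ℕ) (hn : 0 < n) (x : ℤ) :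
    (n : ℤ) ∣ ((r + 1 : ℕ) : ℤ) * x ↔ ((n / Nat.gcd n (r + 1) : ℕ) : ℤ) ∣ x := by
  set g := Nat.gcd n (r + 1) with hg
  have hg0 : 0 < g := Nat.gcd_pos_of_pos_left _ hn
  have hng : g ∣ n := Nat.gcd_dvd_left _ _
  have hrg : g ∣ r + 1 := Nat.gcd_dvd_right _ _
  have hcop0 : Nat.Coprime (n / g) ((r + 1) / g) :=
    Nat.coprime_div_gcd_div_gcd (m := n) (n := r + 1) hg0
  obtain ⟨c, hc⟩ := hng
  obtain ⟨s, hs⟩ := hrg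
  have hdivc : n / g = c := by rw [hc, Nat.mul_div_cancel_left _ hg0]
  have hdivs : (r + 1) / g = s := by rw [hs, Nat.mul_div_cancel_left _ hg0]
  have hcop : Nat.Coprime c s := by rwa [hdivc, hdivs] at hcop0
  rw [hdivc, hc, hs]
  push_cast
  constructor
  · rintro ⟨t, ht⟩
    have hgz : (g : ℤ) ≠ 0 := by exact_mod_cast hg0.ne'
    have h1 : (s : ℤ) * x = (c : ℤ) * t := by
      apply mul_left_cancel₀ hgz
      rw [← mul_assoc, ← mul_assoc, ← ht]
    have h2 : (c : ℤ) ∣ (s : ℤ) * x := ⟨t, h1⟩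
    have hic : IsCoprime (c : ℤ) (s : ℤ) := by
      rw [Int.isCoprime_iff_gcd_eq_one, Int.gcd_natCast_natCast]; exact hcop
    exact hic.dvd_of_dvd_mul_left h2
  · rintro ⟨t, ht⟩
    exact ⟨s * t, by rw [ht]; ring⟩

/-- Kazhdan–Patterson covering computation for `GL_r`: with `c = n / gcd(n, r+1)`,
`n ∣ m_j + (m₁ + ⋯ + m_r)` for all `j` iff `m_i ≡ m_j (mod n)` for all `i, j`
and `c ∣ m_i` for all `i`. -/
theorem stmt_13 (r n : ℕ) (hr : 0 < r) (hn : 0 < n) (m : Fin r → ℤ) :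
    (∀ j : Fin r, (n : ℤ) ∣ (m j + ∑ i, m i)) ↔
      ((∀ i j : Fin r, (n : ℤ) ∣ (m i - m j)) ∧
        (∀ i : Fin r, ((n / Nat.gcd n (r + 1) : ℕ) : ℤ) ∣ m i)) := by
  have key : ∀ j : Fin r, (∀ i j : Fin r, (n : ℤ) ∣ (m i - m j)) →
      (n : ℤ) ∣ (m j + ∑ i, m i) - ((r + 1 : ℕ) : ℤ) * m j := by
    intro j hpair
    have : (m j + ∑ i, m i) - ((r + 1 : ℕ) : ℤ) * m j = ∑ i, (m i - m j) := by
      rw [Finset.sum_sub_distrib, Finset.sum_const, Finset.card_univ, Fintype.card_fin]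
      push_cast
      ring
    rw [this]
    exact Finset.dvd_sum fun i _ => hpair i j
  constructor
  · intro h
    have hpair : ∀ i j : Fin r, (n : ℤ) ∣ (m i - m j) := by
      intro i j
      have := dvd_sub (h i) (h j)
      simpa using this
    refine ⟨hpair, fun i => ?_⟩
    rw [← aux_dvd_iff r n hn]
    have := dvd_sub (h i) (key i hpair)
    simpa using this
  · rintro ⟨hpair, hc⟩
    intro j
    have h1 : (n : ℤ) ∣ ((r + 1 : ℕ) : ℤ) * m j := (aux_dvd_iff r n hn _).2 (hc j)
    have := dvd_add (key j hpair) h1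
    simpa using this
end

section
/- Let p be an odd prime and let ℤ_p denote the ring of p-adic integers. Then every group homomorphism φ : GL₂(ℤ_p) → {±1} factors through the determinant composed with reduction to the residue field: there exists a group homomorphism χ : (ℤ/pℤ)ˣ → {±1} such that φ(g) = χ(det(g) mod p) for all g ∈ GL₂(ℤ_p). In particular, φ is trivial on SL₂(ℤ_p) and on every g whose determinant lies in 1 + pℤ_p. -/
/-!
Every element of `ℤˣ` squares to `1`, so `φ` kills all squares. As `2` is a unit, each unipotent
`[1, x; 0, 1]` is the square of `[1, x/2; 0, 1]`, and likewise for lower unipotents; over a local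
ring these generate `SL₂`, so `φ` is trivial on `SL₂(ℤ_p)`. By Hensel's lemma a unit `≡ 1 mod p`
is a square `v²`, and a matrix `g` of such determinant is `k² · s` with `det k = v` and
`s ∈ SL₂(ℤ_p)`. Hence `φ` vanishes on the kernel of the surjection
`det mod p : GL₂(ℤ_p) → (ℤ/pℤ)ˣ` and factors through it.
-/

lemma exists_add_self_eq_of_isUnit_two {R : Type*} [Semiring R] (h2 : IsUnit (2 : R)) (x : R) :
    ∃ y, y + y = x :=
  ⟨↑h2.unit⁻¹ * x, by rw [← two_mul, ← mul_assoc, h2.mul_val_inv, one_mul]⟩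

namespace Matrix.GeneralLinearGroup

variable {R : Type*}

@[simps apply]
def lowerLeftHom [Ring R] : AddChar R (GL (Fin 2) R) where
  toFun x := ⟨!![1, 0; x, 1], !![1, 0; -x, 1], by simp [one_fin_two], by simp [one_fin_two]⟩
  map_zero_eq_one' := by simp [Units.ext_iff, one_fin_two]
  map_add_eq_mul' a b := by simp [Units.ext_iff, add_comm]

variable [CommRing R]

lemma eq_upperRight_mul_lowerLeft_mul_upperRight {g : GL (Fin 2) R} (hg : g.det = 1)
    {k : R} (hk : k * g 1 0 = 1) :
    g = upperRightHom (k * (g 0 0 - 1)) * lowerLeftHom (g 1 0) *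
      upperRightHom (k * (g 1 1 - 1)) := by
  have hdet : g 0 0 * g 1 1 - g 0 1 * g 1 0 = 1 := by
    simpa [Units.ext_iff, det_fin_two] using hg
  ext : 1
  simp only [Units.val_mul, upperRightHom_apply, lowerLeftHom_apply, mul_fin_two]
  conv_lhs => rw [eta_fin_two (g : Matrix (Fin 2) (Fin 2) R)]
  congr 1
  simp only [vecCons_inj, and_true]
  refine ⟨⟨?_, ?_⟩, ?_, ?_⟩
  · linear_combination (1 - g 0 0) * hk
  · linear_combination (-(k * (g 0 0 - 1) * (g 1 1 - 1)) - g 0 1) * hk - k * hdet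
  · ring
  · linear_combination (1 - g 1 1) * hk

section Unipotent

variable {G : Type*} [Monoid G] (φ : GL (Fin 2) R →* G)
  (hU : ∀ x, φ (upperRightHom x) = 1) (hL : ∀ x, φ (lowerLeftHom x) = 1)
include hU hL

lemma map_eq_one_of_det_eq_one_of_isUnit {g : GL (Fin 2) R} (hg : g.det = 1)
    (hc : IsUnit (g 1 0)) : φ g = 1 := by
  obtain ⟨k, hk⟩ := hc.exists_left_inv
  rw [eq_upperRight_mul_lowerLeft_mul_upperRight hg hk, map_mul, map_mul, hU, hU, hL, mul_one,
    mul_one]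

lemma map_eq_one_of_det_eq_one [IsLocalRing R] {g : GL (Fin 2) R} (hg : g.det = 1) :
    φ g = 1 := by
  by_cases hc : IsUnit (g 1 0)
  · exact map_eq_one_of_det_eq_one_of_isUnit φ hU hL hg hc
  have ha : IsUnit (g 0 0) := by
    have hdet : g 0 0 * g 1 1 + -(g 0 1 * g 1 0) = 1 := by
      simpa [Units.ext_iff, det_fin_two, sub_eq_add_neg] using hg
    refine (IsLocalRing.isUnit_or_isUnit_of_isUnit_add (hdet ▸ isUnit_one)).elim
      (fun h ↦ isUnit_of_mul_isUnit_left h) fun h ↦ ?_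
    exact absurd (isUnit_of_mul_isUnit_right ((IsUnit.neg_iff _).mp h)) hc
  set g' : GL (Fin 2) R := lowerLeftHom 1 * g
  have hc' : IsUnit (g' 1 0) := by
    have : g' 1 0 + -g 1 0 = g 0 0 := by
      simp [g', Matrix.mul_apply, Fin.sum_univ_two]
    exact (IsLocalRing.isUnit_or_isUnit_of_isUnit_add (this ▸ ha)).resolve_right fun h ↦
      hc ((IsUnit.neg_iff _).mp h)
  have hg' : g'.det = 1 := by
    simp [g', hg, Units.ext_iff, det_fin_two]
  simpa only [g', map_mul, hL, one_mul] using
    map_eq_one_of_det_eq_one_of_isUnit φ hU hL hg' hc'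

end Unipotent

section SignCharacter

variable (φ : GL (Fin 2) R →* ℤˣ) (h2 : IsUnit (2 : R))
include h2

lemma map_upperRightHom_eq_one (x : R) : φ (upperRightHom x) = 1 := by
  obtain ⟨y, rfl⟩ := exists_add_self_eq_of_isUnit_two h2 x
  rw [AddChar.map_add_eq_mul, map_mul, Int.units_mul_self]

lemma map_lowerLeftHom_eq_one (x : R) : φ (lowerLeftHom x) = 1 := by
  obtain ⟨y, rfl⟩ := exists_add_self_eq_of_isUnit_two h2 x
  rw [AddChar.map_add_eq_mul, map_mul, Int.units_mul_self]

variable [IsLocalRing R]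

lemma map_eq_one_of_isSquare_det {g : GL (Fin 2) R} (hg : IsSquare g.det) : φ g = 1 := by
  obtain ⟨v, hv⟩ := hg
  obtain ⟨k, rfl⟩ := det_surjective (n := Fin 2) v
  have hdet : ((k * k)⁻¹ * g).det = 1 := by rw [map_mul, map_inv, map_mul, hv, inv_mul_cancel]
  rw [← mul_inv_cancel_left (k * k) g, map_mul, map_mul, Int.units_mul_self, one_mul,
    map_eq_one_of_det_eq_one φ (map_upperRightHom_eq_one φ h2) (map_lowerLeftHom_eq_one φ h2)
      hdet]

end SignCharacter

end Matrix.GeneralLinearGroup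

open Polynomial in
lemma HenselianRing.isSquare_of_sub_one_mem {R : Type*} [CommRing R] {I : Ideal R}
    [HenselianRing R I] (h2 : IsUnit (2 : R)) {u : R} (hu : u - 1 ∈ I) : IsSquare u := by
  have heval : (X ^ 2 - C u).eval 1 ∈ I := by
    simpa only [eval_sub, eval_pow, eval_X, one_pow, eval_C, neg_sub] using I.neg_mem hu
  have hderiv : (derivative (X ^ 2 - C u)).eval 1 = 2 := by simp [one_add_one_eq_two]
  obtain ⟨a, ha, -⟩ := HenselianRing.is_henselian (X ^ 2 - C u)
    (monic_X_pow_sub_C u two_ne_zero) 1 heval (hderiv ▸ h2.map (Ideal.Quotient.mk I))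
  exact ⟨a, by simpa [sub_eq_zero, sq, eq_comm] using ha⟩

namespace PadicInt

variable {p : ℕ} [Fact p.Prime]

lemma isUnit_two (hp : Odd p) : IsUnit (2 : ℤ_[p]) := by
  simpa [isUnit_iff] using norm_natCast_eq_one_iff.mpr (Nat.coprime_two_right.mpr hp)

lemma isSquare_of_toZMod_eq_one (hp : Odd p) {u : ℤ_[p]ˣ} (hu : toZMod (u : ℤ_[p]) = 1) :
    IsSquare u := by
  have hmem : (u : ℤ_[p]) - 1 ∈ IsLocalRing.maximalIdeal ℤ_[p] := by
    rw [← ker_toZMod, RingHom.mem_ker, map_sub, hu, map_one, sub_self]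
  obtain ⟨a, ha⟩ := HenselianRing.isSquare_of_sub_one_mem (isUnit_two hp) hmem
  have hunit : IsUnit a := isUnit_of_mul_isUnit_left (ha ▸ u.isUnit)
  exact ⟨hunit.unit, Units.ext ha⟩

end PadicInt

/-- For an odd prime `p`, every homomorphism `φ : GL₂(ℤ_p) → {±1}` factors as a
character of `(ℤ/pℤ)ˣ` composed with the reduction of the determinant; in
particular `φ` is trivial on `SL₂(ℤ_p)` and on every `g` whose determinant lies
in `1 + pℤ_p`. -/
theorem stmt_15 (p : ℕ) [Fact p.Prime] (hp : Odd p)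
    (φ : Matrix.GeneralLinearGroup (Fin 2) ℤ_[p] →* ℤˣ) :
    ∃ χ : (ZMod p)ˣ →* ℤˣ,
      (∀ g : Matrix.GeneralLinearGroup (Fin 2) ℤ_[p],
        φ g = χ (Units.map (PadicInt.toZMod (p := p)).toMonoidHom
          (Matrix.GeneralLinearGroup.det g))) ∧
      (∀ g : Matrix.GeneralLinearGroup (Fin 2) ℤ_[p],
        Matrix.GeneralLinearGroup.det g = 1 → φ g = 1) ∧
      (∀ g : Matrix.GeneralLinearGroup (Fin 2) ℤ_[p],
        PadicInt.toZMod ((Matrix.GeneralLinearGroup.det g : ℤ_[p]ˣ) : ℤ_[p]) = 1 →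
          φ g = 1) := by
  have hker (g : GL (Fin 2) ℤ_[p])
      (hg : PadicInt.toZMod (Matrix.GeneralLinearGroup.det g : ℤ_[p]) = 1) : φ g = 1 :=
    Matrix.GeneralLinearGroup.map_eq_one_of_isSquare_det φ (PadicInt.isUnit_two hp)
      (PadicInt.isSquare_of_toZMod_eq_one hp hg)
  let ψ : GL (Fin 2) ℤ_[p] →* (ZMod p)ˣ :=
    (Units.map (PadicInt.toZMod (p := p)).toMonoidHom).comp Matrix.GeneralLinearGroup.det
  have hψ : Function.Surjective ψ :=
    (IsLocalRing.surjective_units_map_of_local_ringHom _ (ZMod.ringHom_surjective _)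
      (ZMod.ringHom_surjective _).isLocalHom).comp Matrix.GeneralLinearGroup.det_surjective
  let φ' : {φ' : GL (Fin 2) ℤ_[p] →* ℤˣ // ψ.ker ≤ φ'.ker} :=
    ⟨φ, fun g hg ↦ hker g (congrArg Units.val hg)⟩
  exact ⟨ψ.liftOfSurjective hψ φ', fun g ↦ (ψ.liftOfRightInverse_comp_apply _ _ φ' g).symm,
    fun g hg ↦ hker g (by simp [hg]), hker⟩
end
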